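/- For every ℓ ∈ ℝⁿ and every t ∈ ℕ, ∫_Δ (ℓᵀx)ᵗ dx = (t!/(n+t)!) · E_t(ℓ), where E_t(ℓ) = Σ_{|α|=t} ℓ^α is the sum over all monomials of degree t evaluated at ℓ and Δ is the canonical simplex in ℝⁿ. -/

import Mathlib

/-!
Expanding `(∑ ℓᵢ xᵢ)^t` by the multinomial theorem reduces the claim to the Dirichlet integrals
`∫_{cΔ} x^k dx = (∏ kᵢ!) / (n + |k|)! · c^(n + |k|)`, since `multinomial k · ∏ kᵢ! = t!` then
leaves every monomial `ℓ^k` with the same coefficient `t! / (n + t)!`. The Dirichlet integrals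
follow by induction on `n`: the slice of `cΔ` at `x₀ = y` is the simplex of size `c - y` in the
other coordinates, so the induction hypothesis leaves the Beta integral
`∫₀^c y^a (c - y)^b dy = a! b! / (a + b + 1)! · c^(a + b + 1)`.
-/

open MeasureTheory Finset

/-- `Esum n t y = Σ_{|α| = t} y^α`, the homogeneous polynomial of degree `t`
with all coefficients equal to `1`, evaluated at `y`. -/
noncomputable def Esum (n t : ℕ) (y : Fin n → ℝ) : ℝ :=
  ∑ α ∈ Finset.univ.filter (fun α : Fin n → Fin (t + 1) => ∑ i, (α i : ℕ) = t),
    ∏ i, y i ^ (α i : ℕ)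

open scoped Nat

def solidSimplex (ι : Type*) [Fintype ι] (c : ℝ) : Set (ι → ℝ) :=
  {x | (∀ i, 0 ≤ x i) ∧ ∑ i, x i ≤ c}

section solidSimplex

variable {ι : Type*} [Fintype ι]

theorem isClosed_solidSimplex (c : ℝ) : IsClosed (solidSimplex ι c) :=
  (isClosed_le continuous_const continuous_id).inter
    (isClosed_le (continuous_finsetSum _ fun i _ => continuous_apply i) continuous_const)

theorem measurableSet_solidSimplex (c : ℝ) : MeasurableSet (solidSimplex ι c) :=
  (isClosed_solidSimplex c).measurableSet

theorem solidSimplex_subset_Icc (c : ℝ) : solidSimplex ι c ⊆ Set.Icc 0 (fun _ => c) :=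
  fun _ ⟨hx₀, hxc⟩ =>
    ⟨hx₀, fun i => (single_le_sum (fun j _ => hx₀ j) (mem_univ i)).trans hxc⟩

theorem isCompact_solidSimplex (c : ℝ) : IsCompact (solidSimplex ι c) :=
  isCompact_Icc.of_isClosed_subset (isClosed_solidSimplex c) (solidSimplex_subset_Icc c)

end solidSimplex

theorem cons_mem_solidSimplex_iff {n : ℕ} {c y : ℝ} {z : Fin n → ℝ} :
    Fin.cons y z ∈ solidSimplex (Fin (n + 1)) c ↔
      y ∈ Set.Icc 0 c ∧ z ∈ solidSimplex (Fin n) (c - y) := by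
  simp only [solidSimplex, Set.mem_ofPred_eq, Fin.forall_fin_succ, Fin.sum_cons, Fin.cons_zero,
    Fin.cons_succ, Set.mem_Icc]
  constructor
  · rintro ⟨⟨hy, hz⟩, hsum⟩
    have : 0 ≤ ∑ j, z j := sum_nonneg fun j _ => hz j
    exact ⟨⟨hy, by linarith⟩, hz, by linarith⟩
  · rintro ⟨⟨hy, -⟩, hz, hsum⟩
    exact ⟨⟨hy, hz⟩, by linarith⟩

theorem lintegral_fin_succ_cons {n : ℕ} {E : Type*} [MeasureSpace E]
    [SigmaFinite (volume : Measure E)] {f : (Fin (n + 1) → E) → ENNReal} (hf : Measurable f) :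
    ∫⁻ x, f x = ∫⁻ y, ∫⁻ z, f (Fin.cons y z) := by
  have he := (volume_preserving_piFinSuccAbove (fun _ : Fin (n + 1) => E) 0).symm
  rw [← he.lintegral_comp hf, Measure.volume_eq_prod]
  refine (lintegral_prod _ (hf.comp he.measurable).aemeasurable).trans ?_
  simp [MeasurableEquiv.piFinSuccAbove_symm_apply, Fin.insertNthEquiv]

theorem integral_pow_mul_one_sub_pow (a b : ℕ) :
    ∫ x in (0 : ℝ)..1, x ^ a * (1 - x) ^ b = (a ! * b ! : ℝ) / (a + b + 1)! := by
  have h := Complex.Gamma_mul_Gamma_eq_betaIntegral (s := a + 1) (t := b + 1)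
    (by simp; positivity) (by simp; positivity)
  rw [show (a + 1 : ℂ) + (b + 1) = (a + b + 1 : ℕ) + 1 by push_cast; ring,
    Complex.Gamma_nat_eq_factorial, Complex.Gamma_nat_eq_factorial,
    Complex.Gamma_nat_eq_factorial, Complex.betaIntegral] at h
  simp only [add_sub_cancel_right, Complex.cpow_natCast] at h
  have hreal : ∫ x in (0 : ℝ)..1, (x : ℂ) ^ a * (1 - x) ^ b =
      ((∫ x in (0 : ℝ)..1, x ^ a * (1 - x) ^ b : ℝ) : ℂ) := by
    rw [← intervalIntegral.integral_ofReal]; push_cast; rfl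
  rw [hreal] at h
  rw [eq_div_iff (by positivity), mul_comm]
  exact_mod_cast h.symm

theorem integral_pow_mul_sub_pow (a b : ℕ) (c : ℝ) :
    ∫ x in (0 : ℝ)..c, x ^ a * (c - x) ^ b =
      (a ! * b ! : ℝ) / (a + b + 1)! * c ^ (a + b + 1) := by
  have hscale : ∀ x : ℝ, (c * x) ^ a * (c - c * x) ^ b = c ^ (a + b) * (x ^ a * (1 - x) ^ b) :=
    fun x => by rw [← mul_one_sub, mul_pow, mul_pow]; ring
  have h := intervalIntegral.smul_integral_comp_mul_left (fun x => x ^ a * (c - x) ^ b) c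
    (a := 0) (b := 1)
  simp only [mul_zero, mul_one, hscale, intervalIntegral.integral_const_mul,
    integral_pow_mul_one_sub_pow, smul_eq_mul] at h
  rw [← h]
  ring

theorem lintegral_Icc_pow_mul_sub_pow (a b : ℕ) {c : ℝ} (hc : 0 ≤ c) :
    ∫⁻ y in Set.Icc 0 c, ENNReal.ofReal (y ^ a * (c - y) ^ b) =
      ENNReal.ofReal ((a ! * b ! : ℝ) / (a + b + 1)! * c ^ (a + b + 1)) := by
  have hnonneg : 0 ≤ᵐ[volume.restrict (Set.Icc 0 c)] fun y => y ^ a * (c - y) ^ b :=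
    (ae_restrict_iff' measurableSet_Icc).2 <| ae_of_all _ fun y hy =>
      mul_nonneg (pow_nonneg hy.1 _) (pow_nonneg (sub_nonneg.2 hy.2) _)
  have hint : IntegrableOn (fun y : ℝ => y ^ a * (c - y) ^ b) (Set.Icc 0 c) :=
    (by fun_prop : Continuous fun y : ℝ => y ^ a * (c - y) ^ b).integrableOn_Icc
  rw [← ofReal_integral_eq_lintegral_ofReal hint hnonneg, integral_Icc_eq_integral_Ioc,
    ← intervalIntegral.integral_of_le hc, integral_pow_mul_sub_pow]

theorem indicator_solidSimplex_cons {n : ℕ} {c y : ℝ} {z : Fin n → ℝ}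
    (f : ℝ → ENNReal) (g : (Fin n → ℝ) → ENNReal) :
    (solidSimplex (Fin (n + 1)) c).indicator (fun x => f (x 0) * g (Fin.tail x)) (Fin.cons y z) =
      (Set.Icc 0 c).indicator f y * (solidSimplex (Fin n) (c - y)).indicator g z := by
  by_cases hy : y ∈ Set.Icc 0 c <;> by_cases hz : z ∈ solidSimplex (Fin n) (c - y) <;>
    simp [Set.indicator, cons_mem_solidSimplex_iff, hy, hz]

theorem lintegral_prod_pow_solidSimplex (n : ℕ) (k : Fin n → ℕ) {c : ℝ} (hc : 0 ≤ c) :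
    ∫⁻ x in solidSimplex (Fin n) c, ∏ i, ENNReal.ofReal (x i) ^ k i =
      ENNReal.ofReal ((∏ i, (k i)! : ℝ) / (n + ∑ i, k i)! * c ^ (n + ∑ i, k i)) := by
  induction n generalizing c with
  | zero =>
    have huniv : solidSimplex (Fin 0) c = Set.univ := by ext; simp [solidSimplex, hc]
    simp [huniv, volume_pi]
  | succ n ih =>
    set a := k 0
    set m := ∑ j : Fin n, k j.succ
    set K : ℝ := (∏ j : Fin n, (k j.succ)! : ℝ) / (n + m)!
    have hK : 0 ≤ K := by positivity
    have hmeas : ∀ {p : ℕ} (e : Fin p → ℕ),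
        Measurable fun x : Fin p → ℝ => ∏ i, ENNReal.ofReal (x i) ^ e i := fun e => by fun_prop
    calc ∫⁻ x in solidSimplex (Fin (n + 1)) c, ∏ i, ENNReal.ofReal (x i) ^ k i
        = ∫⁻ y, ∫⁻ z, (Set.Icc 0 c).indicator (fun y => ENNReal.ofReal y ^ a) y *
            (solidSimplex (Fin n) (c - y)).indicator
              (fun z => ∏ j, ENNReal.ofReal (z j) ^ k j.succ) z := by
          rw [← lintegral_indicator (measurableSet_solidSimplex c),
            lintegral_fin_succ_cons ((hmeas k).indicator (measurableSet_solidSimplex c))]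
          simp only [Fin.prod_univ_succ, ← indicator_solidSimplex_cons]
          rfl
      _ = ∫⁻ y in Set.Icc 0 c,
            ENNReal.ofReal K * ENNReal.ofReal (y ^ a * (c - y) ^ (n + m)) := by
          rw [← lintegral_indicator measurableSet_Icc]
          refine lintegral_congr fun y => ?_
          rw [lintegral_const_mul _ ((hmeas _).indicator (measurableSet_solidSimplex _)),
            lintegral_indicator (measurableSet_solidSimplex _)]
          by_cases hy : y ∈ Set.Icc 0 c
          · rw [Set.indicator_of_mem hy, Set.indicator_of_mem hy, ih _ (sub_nonneg.2 hy.2),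
              ← ENNReal.ofReal_pow hy.1, ← ENNReal.ofReal_mul (pow_nonneg hy.1 _),
              ← ENNReal.ofReal_mul hK]
            congr 1
            ring
          · simp [hy]
      _ = _ := by
          rw [lintegral_const_mul _ (by fun_prop), lintegral_Icc_pow_mul_sub_pow _ _ hc,
            ← ENNReal.ofReal_mul hK]
          congr 1
          rw [Fin.prod_univ_succ, Fin.sum_univ_succ, show n + 1 + (a + m) = a + (n + m) + 1 by ring]
          simp only [K, a]
          field_simp

theorem integral_prod_pow_solidSimplex (n : ℕ) (k : Fin n → ℕ) {c : ℝ} (hc : 0 ≤ c) :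
    ∫ x in solidSimplex (Fin n) c, ∏ i, x i ^ k i =
      (∏ i, (k i)! : ℝ) / (n + ∑ i, k i)! * c ^ (n + ∑ i, k i) := by
  have hnonneg : ∀ x ∈ solidSimplex (Fin n) c, 0 ≤ ∏ i, x i ^ k i :=
    fun x hx => prod_nonneg fun i _ => pow_nonneg (hx.1 i) _
  have hofReal : ∀ x ∈ solidSimplex (Fin n) c,
      ENNReal.ofReal (∏ i, x i ^ k i) = ∏ i, ENNReal.ofReal (x i) ^ k i := fun x hx => by
    rw [ENNReal.ofReal_prod_of_nonneg fun i _ => pow_nonneg (hx.1 i) _]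
    simp_rw [ENNReal.ofReal_pow (hx.1 _)]
  rw [integral_eq_lintegral_of_nonneg_ae
      ((ae_restrict_iff' (measurableSet_solidSimplex c)).2 (ae_of_all _ hnonneg))
      (Continuous.aestronglyMeasurable (by fun_prop)),
    setLIntegral_congr_fun (measurableSet_solidSimplex c) hofReal,
    lintegral_prod_pow_solidSimplex n k hc, ENNReal.toReal_ofReal (by positivity)]

theorem Esum_eq_sum_piAntidiag (n t : ℕ) (y : Fin n → ℝ) :
    Esum n t y = ∑ k ∈ piAntidiag univ t, ∏ i, y i ^ k i := by
  have hlt : ∀ k ∈ piAntidiag (univ : Finset (Fin n)) t, ∀ i, k i < t + 1 := fun k hk i =>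
    Nat.lt_succ_of_le <|
      (mem_piAntidiag.1 hk).1 ▸ single_le_sum (fun j _ => Nat.zero_le _) (mem_univ i)
  refine sum_nbij' (fun α i => (α i : ℕ)) (fun k i => Fin.ofNat (t + 1) (k i)) ?_ ?_ ?_ ?_ ?_
  · intro α hα
    simpa [mem_piAntidiag] using hα
  · intro k hk
    simpa [Nat.mod_eq_of_lt (hlt k hk _)] using (mem_piAntidiag.1 hk).1
  · intro α _
    ext i
    simp
  · intro k hk
    ext i
    exact Nat.mod_eq_of_lt (hlt k hk i)
  · intro α _
    rfl

theorem integral_pow_linear_form_simplex (n t : ℕ) (ℓ : Fin n → ℝ) :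
    ∫ x in {x : Fin n → ℝ | (∀ i, 0 ≤ x i) ∧ ∑ i, x i ≤ 1}, (∑ i, ℓ i * x i) ^ t =
      ((Nat.factorial t : ℝ) / (Nat.factorial (n + t) : ℝ)) * Esum n t ℓ := by
  change ∫ x in solidSimplex (Fin n) 1, _ = _
  have hint (k : Fin n → ℕ) :
      IntegrableOn (fun x => ∏ i, x i ^ k i) (solidSimplex (Fin n) 1) :=
    (by fun_prop : Continuous _).continuousOn.integrableOn_compact (isCompact_solidSimplex 1)
  simp_rw [sum_pow_eq_sum_piAntidiag, mul_pow, prod_mul_distrib, ← mul_assoc]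
  rw [integral_finsetSum _ fun k _ => (hint k).const_mul _]
  simp_rw [integral_const_mul, integral_prod_pow_solidSimplex _ _ zero_le_one, one_pow, mul_one]
  rw [Esum_eq_sum_piAntidiag, mul_sum]
  refine sum_congr rfl fun k hk => ?_
  have hsum : ∑ i, k i = t := (mem_piAntidiag.1 hk).1
  have hcoeff : (Nat.multinomial univ k * ∏ i, ((k i)! : ℝ)) = t ! := by
    rw [← hsum]
    exact_mod_cast (mul_comm _ _).trans (Nat.multinomial_spec univ k)
  rw [hsum, ← hcoeff]
  ring
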